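/- Let ρ > 0, ε ∈ [0,1), ν ∈ [0,1], m₁, m₂, α̃, α₂ ∈ ℝ and ι_c ≥ 0. With b, c as in the critical case η = 0, i.e. b(u) = (m₁u/(1−ε))·(1 + νρu/2)/(2+ρu) and c(u) = −((1−ν)²/(1−ε))·(m₁²/ρ²)·[1/2 − 1/(2+ρu)] − (ν·m₁²/(ρ²(1−ε)))·[(1/2 − ν/4)·ρu + (ν/8)·ρ²u² + (ν/48)·ρ³u³], define e(u) = −((1−ν)²/(1−ε))·(m₂ − m₁(2α̃ρ − α₂m₁)/ρ²)·[𝓘₀(u)/2 − (exp(2ι_c u)/ρ)·L(ρ, −2ι_c, u)] + (ν(1−ν)m₁/(2ρ²(1−ε)))·(α̃ − α₂m₁/ρ)·ρ²·𝓘₁(u) − (α₂ν²m₁²/(4ρ³(1−ε)))·[ρ²·𝓘₁(u) + (1/2)·ρ³·𝓘₂(u) + (1/12)·ρ⁴·𝓘₃(u)]. Then e(0) = 0 and, for all u ≥ 0, e'(u) = 2ι_c·e(u) + α̃·(1−ν)·b(u) + α₂·c(u) + ((1−ν)²·m₂/(1−ε))·[1/(2+ρu) − 1/2]. -/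

import Mathlib

/-- L(r, λ, t) = r·∫₀ᵗ exp(λs)/(2 + rs) ds. -/
noncomputable def Lfun (r lam t : ℝ) : ℝ := r * ∫ s in (0:ℝ)..t, Real.exp (lam * s) / (2 + r * s)

/-- 𝓘_p(u) = exp(2ι_c u)·∫₀ᵘ s^p·exp(−2ι_c s) ds. -/
noncomputable def Ifun (ιc : ℝ) (p : ℕ) (u : ℝ) : ℝ :=
  Real.exp (2 * ιc * u) * ∫ s in (0:ℝ)..u, s ^ p * Real.exp (-(2 * ιc * s))

/-- b(u) in the critical case η = 0. -/
noncomputable def bCrit (ρ ε ν m₁ : ℝ) (u : ℝ) : ℝ :=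
  (m₁ * u / (1 - ε)) * (1 + ν * ρ * u / 2) / (2 + ρ * u)

/-- c(u) in the critical case η = 0. -/
noncomputable def cCrit (ρ ε ν m₁ : ℝ) (u : ℝ) : ℝ :=
  -((1 - ν) ^ 2 / (1 - ε)) * (m₁ ^ 2 / ρ ^ 2) * (1 / 2 - 1 / (2 + ρ * u))
    - (ν * m₁ ^ 2 / (ρ ^ 2 * (1 - ε)))
        * ((1 / 2 - ν / 4) * (ρ * u) + (ν / 8) * (ρ * u) ^ 2 + (ν / 48) * (ρ * u) ^ 3)

/-- e(u) in the critical case η = 0. -/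
noncomputable def eCrit (ρ ε ν m₁ m₂ αt α₂ ιc : ℝ) (u : ℝ) : ℝ :=
  -((1 - ν) ^ 2 / (1 - ε)) * (m₂ - m₁ * (2 * αt * ρ - α₂ * m₁) / ρ ^ 2)
      * (Ifun ιc 0 u / 2 - (Real.exp (2 * ιc * u) / ρ) * Lfun ρ (-(2 * ιc)) u)
    + (ν * (1 - ν) * m₁ / (2 * ρ ^ 2 * (1 - ε))) * (αt - α₂ * m₁ / ρ) * (ρ ^ 2 * Ifun ιc 1 u)
    - (α₂ * ν ^ 2 * m₁ ^ 2 / (4 * ρ ^ 3 * (1 - ε)))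
        * (ρ ^ 2 * Ifun ιc 1 u + (1 / 2) * ρ ^ 3 * Ifun ιc 2 u + (1 / 12) * ρ ^ 4 * Ifun ιc 3 u)

/-! Both `𝓘_p` and `exp(κu)·L(ρ, −κ, u)/ρ` have the Duhamel form `exp(κu)·∫₀ᵘ g(s)·exp(−κs) ds`,
which solves `y' = κy + g`. With `κ = 2ι_c`, `e` is a linear combination of such terms, so
`e' − 2ι_c·e` is the same combination of the forcings `1, u, u², u³` and `1/(2 + ρu)`; that this
equals the stated right-hand side is a rational-function identity. -/

open Real

theorem hasDerivAt_exp_mul_integral_mul_exp_neg {g : ℝ → ℝ} {S : Set ℝ} {κ u : ℝ}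
    (hS : IsOpen S) (hg : ContinuousOn g S) (hsub : Set.uIcc 0 u ⊆ S) :
    HasDerivAt (fun t => exp (κ * t) * ∫ s in (0:ℝ)..t, g s * exp (-(κ * s)))
      (κ * (exp (κ * u) * ∫ s in (0:ℝ)..u, g s * exp (-(κ * s))) + g u) u := by
  have huS : u ∈ S := hsub Set.right_mem_uIcc
  have hcont : ContinuousOn (fun s => g s * exp (-(κ * s))) S := hg.mul (by fun_prop)
  have hF := intervalIntegral.integral_hasDerivAt_right ((hcont.mono hsub).intervalIntegrable)
    (hcont.stronglyMeasurableAtFilter hS u huS) (hcont.continuousAt (hS.mem_nhds huS))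
  have hE : HasDerivAt (fun t => exp (κ * t)) (exp (κ * u) * κ) u :=
    ((hasDerivAt_id u).const_mul κ).exp.congr_deriv (by simp)
  refine (hE.mul hF).congr_deriv ?_
  have : exp (κ * u) * exp (-(κ * u)) = 1 := by rw [← exp_add, add_neg_cancel, exp_zero]
  linear_combination g u * this

theorem hasDerivAt_Ifun (ιc : ℝ) (p : ℕ) (u : ℝ) :
    HasDerivAt (Ifun ιc p) (2 * ιc * Ifun ιc p u + u ^ p) u :=
  hasDerivAt_exp_mul_integral_mul_exp_neg isOpen_univ (continuous_pow p).continuousOn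
    (Set.subset_univ _)

theorem exp_div_mul_Lfun {ρ : ℝ} (hρ : ρ ≠ 0) (κ t : ℝ) :
    exp (κ * t) / ρ * Lfun ρ (-κ) t
      = exp (κ * t) * ∫ s in (0:ℝ)..t, (2 + ρ * s)⁻¹ * exp (-(κ * s)) := by
  have hintegrand : (fun s => exp (-κ * s) / (2 + ρ * s))
      = fun s => (2 + ρ * s)⁻¹ * exp (-(κ * s)) := by
    funext s; rw [neg_mul, div_eq_inv_mul]
  rw [Lfun, hintegrand]
  field_simp

theorem hasDerivAt_exp_div_mul_Lfun {ρ : ℝ} (hρ : 0 < ρ) (κ : ℝ) {u : ℝ} (hu : 0 ≤ u) :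
    HasDerivAt (fun t => exp (κ * t) / ρ * Lfun ρ (-κ) t)
      (κ * (exp (κ * u) / ρ * Lfun ρ (-κ) u) + (2 + ρ * u)⁻¹) u := by
  simp_rw [exp_div_mul_Lfun hρ.ne']
  refine hasDerivAt_exp_mul_integral_mul_exp_neg (S := {s | 0 < 2 + ρ * s})
    (isOpen_lt continuous_const (by fun_prop)) ?_ ?_
  · exact ContinuousOn.inv₀ (by fun_prop) fun s hs => ne_of_gt hs
  · rw [Set.uIcc_of_le hu]
    exact fun s hs => show 0 < 2 + ρ * s by have := hs.1; positivity

theorem eCrit_ODE_general (ρ ε ν m₁ m₂ αt α₂ ιc : ℝ) (hρ : 0 < ρ) :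
    eCrit ρ ε ν m₁ m₂ αt α₂ ιc 0 = 0 ∧
    ∀ u : ℝ, 0 ≤ u →
      HasDerivAt (eCrit ρ ε ν m₁ m₂ αt α₂ ιc)
        (2 * ιc * eCrit ρ ε ν m₁ m₂ αt α₂ ιc u + αt * (1 - ν) * bCrit ρ ε ν m₁ u
          + α₂ * cCrit ρ ε ν m₁ u
          + ((1 - ν) ^ 2 * m₂ / (1 - ε)) * (1 / (2 + ρ * u) - 1 / 2)) u := by
  refine ⟨by simp [eCrit, Ifun, Lfun], fun u hu => ?_⟩
  have hI := hasDerivAt_Ifun ιc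
  have hL := hasDerivAt_exp_div_mul_Lfun hρ (2 * ιc) hu
  have hD : HasDerivAt (eCrit ρ ε ν m₁ m₂ αt α₂ ιc) _ u :=
    ((((hI 0 u).div_const 2).sub hL).const_mul _).add (((hI 1 u).const_mul (ρ ^ 2)).const_mul _)
      |>.sub (((((hI 1 u).const_mul (ρ ^ 2)).add ((hI 2 u).const_mul ((1 / 2) * ρ ^ 3))).add
        ((hI 3 u).const_mul ((1 / 12) * ρ ^ 4))).const_mul _)
  convert hD using 1
  have : 2 + ρ * u ≠ 0 := by positivity
  simp only [eCrit, bCrit, cCrit]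
  field_simp
  ring

theorem eCrit_ODE (ρ ε ν m₁ m₂ αt α₂ ιc : ℝ) (hρ : 0 < ρ) (hε : ε ∈ Set.Ico (0:ℝ) 1)
    (hν : ν ∈ Set.Icc (0:ℝ) 1) (hιc : 0 ≤ ιc) :
    eCrit ρ ε ν m₁ m₂ αt α₂ ιc 0 = 0 ∧
    ∀ u : ℝ, 0 ≤ u →
      HasDerivAt (eCrit ρ ε ν m₁ m₂ αt α₂ ιc)
        (2 * ιc * eCrit ρ ε ν m₁ m₂ αt α₂ ιc u + αt * (1 - ν) * bCrit ρ ε ν m₁ u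
          + α₂ * cCrit ρ ε ν m₁ u
          + ((1 - ν) ^ 2 * m₂ / (1 - ε)) * (1 / (2 + ρ * u) - 1 / 2)) u :=
  eCrit_ODE_general ρ ε ν m₁ m₂ αt α₂ ιc hρ
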